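/- arXiv:2412.02646 — 3 statements merged into one kernel-verified Lean document; each statement's English description precedes it below -/
import Mathlib

section
/- Let X1, X2 be independent Bernoulli(1/2), ε1 ~ Bernoulli(k1), ε2 ~ Bernoulli(k2) mutually independent with 0 < k2 < k1 < 1/2. Let Y = |X1·X2 − ε1| and M = |Y − ε2|. Then the Bayes-optimal classifier using (M, X2) achieves strictly higher accuracy than the Bayes-optimal classifier using (X1, X2): there exists a function f2 of (M,X2) with P(f2(M,X2) = Y) > max over all functions f1 of (X1,X2) of P(f1(X1,X2) = Y). -/
open MeasureTheory

/-- With `X1, X2 ~ Bernoulli(1/2)`, `ε1 ~ Bernoulli(k1)`, `ε2 ~ Bernoulli(k2)` mutually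
independent, `0 < k2 < k1 < 1/2`, `Y = X1·X2 XOR ε1` and `M = Y XOR ε2`, some classifier of
`(M, X2)` is strictly more accurate than every classifier of `(X1, X2)`. -/
theorem stmt2 {Ω : Type*} [MeasurableSpace Ω] (μ : Measure Ω) [IsProbabilityMeasure μ]
    (X1 X2 ε1 ε2 Y M : Ω → Bool)
    (hmX1 : Measurable X1) (hmX2 : Measurable X2)
    (hmε1 : Measurable ε1) (hmε2 : Measurable ε2)
    (k1 k2 : ENNReal) (hk2pos : 0 < k2) (hk21 : k2 < k1) (hk1half : k1 < 1 / 2)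
    (hX1 : μ {ω | X1 ω = true} = 1 / 2)
    (hX2 : μ {ω | X2 ω = true} = 1 / 2)
    (hε1 : μ {ω | ε1 ω = true} = k1)
    (hε2 : μ {ω | ε2 ω = true} = k2)
    (hindep : ∀ a b c d : Bool,
      μ {ω | X1 ω = a ∧ X2 ω = b ∧ ε1 ω = c ∧ ε2 ω = d} =
        μ {ω | X1 ω = a} * μ {ω | X2 ω = b} * μ {ω | ε1 ω = c} * μ {ω | ε2 ω = d})
    (hY : ∀ ω, Y ω = xor (X1 ω && X2 ω) (ε1 ω))
    (hM : ∀ ω, M ω = xor (Y ω) (ε2 ω)) :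
    ∃ f2 : Bool → Bool → Bool, ∀ f1 : Bool → Bool → Bool,
      μ {ω | f1 (X1 ω) (X2 ω) = Y ω} < μ {ω | f2 (M ω) (X2 ω) = Y ω} := by
  classical
  -- complement sums
  have hcompl : ∀ (Z : Ω → Bool), Measurable Z →
      μ {ω | Z ω = true} + μ {ω | Z ω = false} = 1 := by
    intro Z hZ
    have h1 : {ω | Z ω = false} = {ω | Z ω = true}ᶜ := by
      ext ω; simp only [Set.mem_setOf_eq, Set.mem_compl_iff]
      cases Z ω <;> simp
    have h2 : MeasurableSet {ω | Z ω = true} := hZ (measurableSet_singleton true)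
    rw [h1]
    exact (measure_add_measure_compl h2).trans measure_univ
  have hsum1 : k1 + μ {ω | ε1 ω = false} = 1 := by
    rw [← hε1]; exact hcompl ε1 hmε1
  have hsum2 : k2 + μ {ω | ε2 ω = false} = 1 := by
    rw [← hε2]; exact hcompl ε2 hmε2
  have hj1top : μ {ω | ε1 ω = false} ≠ ⊤ := by
    intro h
    rw [h] at hsum1
    simp at hsum1
  have hk2top : k2 ≠ ⊤ := (hk21.trans (hk1half.trans (by norm_num))).ne
  -- k1 ≤ μ {ε1 = false}
  have hk1le : k1 ≤ μ {ω | ε1 ω = false} := by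
    by_contra h
    push_neg at h
    have : (1 : ENNReal) < 1 := by
      calc (1 : ENNReal) = k1 + μ {ω | ε1 ω = false} := hsum1.symm
        _ < 1/2 + 1/2 := ENNReal.add_lt_add hk1half (h.trans hk1half)
        _ = 1 := ENNReal.add_halves 1
    exact absurd this (lt_irrefl _)
  -- μ {ε1 = false} < μ {ε2 = false}
  have hj1j2 : μ {ω | ε1 ω = false} < μ {ω | ε2 ω = false} := by
    have h1 : k2 + μ {ω | ε1 ω = false} < k1 + μ {ω | ε1 ω = false} :=
      ENNReal.add_lt_add_right hj1top hk21
    rw [hsum1, ← hsum2] at h1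
    exact (ENNReal.add_lt_add_iff_left hk2top).1 h1
  -- marginals for X1, X2
  have hX1' : μ {ω | X1 ω = false} = 1 / 2 := by
    have h := hcompl X1 hmX1
    rw [hX1] at h
    have h2 : (1/2 : ENNReal) + 1/2 = 1 := ENNReal.add_halves 1
    have h3 := h.trans h2.symm
    exact (ENNReal.add_right_inj (by norm_num)).1 h3
  have hX2' : μ {ω | X2 ω = false} = 1 / 2 := by
    have h := hcompl X2 hmX2
    rw [hX2] at h
    have h2 : (1/2 : ENNReal) + 1/2 = 1 := ENNReal.add_halves 1
    have h3 := h.trans h2.symm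
    exact (ENNReal.add_right_inj (by norm_num)).1 h3
  have hX1m : ∀ a, μ {ω | X1 ω = a} = 1 / 2 := by
    intro a; cases a
    · exact hX1'
    · exact hX1
  have hX2m : ∀ b, μ {ω | X2 ω = b} = 1 / 2 := by
    intro b; cases b
    · exact hX2'
    · exact hX2
  -- measurability of atoms
  have hA4 : ∀ a b c d : Bool,
      MeasurableSet {ω | X1 ω = a ∧ X2 ω = b ∧ ε1 ω = c ∧ ε2 ω = d} := by
    intro a b c d
    exact ((hmX1 (measurableSet_singleton a)).inter
      ((hmX2 (measurableSet_singleton b)).inter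
        ((hmε1 (measurableSet_singleton c)).inter (hmε2 (measurableSet_singleton d)))))
  have hA3 : ∀ a b c : Bool,
      MeasurableSet {ω | X1 ω = a ∧ X2 ω = b ∧ ε1 ω = c} := by
    intro a b c
    exact ((hmX1 (measurableSet_singleton a)).inter
      ((hmX2 (measurableSet_singleton b)).inter (hmε1 (measurableSet_singleton c))))
  -- atom measures (3 variables)
  have atom3 : ∀ a b c : Bool,
      μ {ω | X1 ω = a ∧ X2 ω = b ∧ ε1 ω = c} = 1/2 * (1/2) * μ {ω | ε1 ω = c} := by
    intro a b c
    have hsplit : {ω | X1 ω = a ∧ X2 ω = b ∧ ε1 ω = c} =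
        {ω | X1 ω = a ∧ X2 ω = b ∧ ε1 ω = c ∧ ε2 ω = true} ∪
        {ω | X1 ω = a ∧ X2 ω = b ∧ ε1 ω = c ∧ ε2 ω = false} := by
      ext ω
      simp only [Set.mem_setOf_eq, Set.mem_union]
      cases he : ε2 ω <;> simp [he] <;> tauto
    have hdisj : Disjoint {ω | X1 ω = a ∧ X2 ω = b ∧ ε1 ω = c ∧ ε2 ω = true}
        {ω | X1 ω = a ∧ X2 ω = b ∧ ε1 ω = c ∧ ε2 ω = false} := by
      rw [Set.disjoint_left]
      rintro ω ⟨_, _, _, h1⟩ ⟨_, _, _, h2⟩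
      rw [h1] at h2; exact Bool.noConfusion h2
    rw [hsplit, measure_union hdisj (hA4 a b c false), hindep a b c true, hindep a b c false,
      hε2, ← mul_add]
    rw [show μ {ω | X1 ω = a} * μ {ω | X2 ω = b} * μ {ω | ε1 ω = c} * (k2 + μ {ω | ε2 ω = false})
        = μ {ω | X1 ω = a} * μ {ω | X2 ω = b} * μ {ω | ε1 ω = c} * 1 by rw [hsum2]]
    rw [mul_one, hX1m, hX2m]
  -- partition lemma
  have part : ∀ Q : Bool → Bool → Bool → Bool,
      μ {ω | Q (X1 ω) (X2 ω) (ε1 ω) = true} =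
        ∑ a : Bool, ∑ b : Bool, ∑ c : Bool,
          if Q a b c then μ {ω | X1 ω = a ∧ X2 ω = b ∧ ε1 ω = c} else 0 := by
    intro Q
    have hU : {ω | Q (X1 ω) (X2 ω) (ε1 ω) = true} =
        ⋃ i : Bool × Bool × Bool,
          if Q i.1 i.2.1 i.2.2 then {ω | X1 ω = i.1 ∧ X2 ω = i.2.1 ∧ ε1 ω = i.2.2} else ∅ := by
      ext ω
      simp only [Set.mem_setOf_eq, Set.mem_iUnion]
      constructor
      · intro h
        refine ⟨(X1 ω, X2 ω, ε1 ω), ?_⟩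
        rw [if_pos h]
        exact ⟨rfl, rfl, rfl⟩
      · rintro ⟨i, hi⟩
        by_cases hq : Q i.1 i.2.1 i.2.2 = true
        · rw [if_pos hq] at hi
          obtain ⟨h1, h2, h3⟩ := hi
          rw [h1, h2, h3]; exact hq
        · rw [if_neg hq] at hi
          exact absurd hi (Set.notMem_empty ω)
    have hmeas : ∀ i : Bool × Bool × Bool, MeasurableSet
        (if Q i.1 i.2.1 i.2.2 then {ω | X1 ω = i.1 ∧ X2 ω = i.2.1 ∧ ε1 ω = i.2.2} else ∅) := by
      intro i
      by_cases hq : Q i.1 i.2.1 i.2.2 = true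
      · rw [if_pos hq]; exact hA3 i.1 i.2.1 i.2.2
      · rw [if_neg hq]; exact MeasurableSet.empty
    have hdisj : Pairwise (Function.onFun Disjoint (fun i : Bool × Bool × Bool =>
        if Q i.1 i.2.1 i.2.2 then {ω | X1 ω = i.1 ∧ X2 ω = i.2.1 ∧ ε1 ω = i.2.2} else ∅)) := by
      intro i j hij
      simp only [Function.onFun]
      by_cases hqi : Q i.1 i.2.1 i.2.2 = true
      · by_cases hqj : Q j.1 j.2.1 j.2.2 = true
        · rw [if_pos hqi, if_pos hqj, Set.disjoint_left]
          rintro ω ⟨h1, h2, h3⟩ ⟨h4, h5, h6⟩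
          apply hij
          obtain ⟨a, b, c⟩ := i
          obtain ⟨a', b', c'⟩ := j
          simp only at h1 h2 h3 h4 h5 h6
          rw [← h1, ← h2, ← h3, h4, h5, h6]
        · rw [if_neg hqj]; exact disjoint_bot_right
      · rw [if_neg hqi]; exact disjoint_bot_left
    rw [hU, measure_iUnion hdisj hmeas, tsum_fintype]
    rw [Fintype.sum_prod_type]
    congr 1
    ext a
    rw [Fintype.sum_prod_type]
    congr 1
    ext b
    congr 1
    ext c
    by_cases hq : Q a b c = true
    · rw [if_pos hq, if_pos hq]
    · rw [if_neg hq, if_neg hq, measure_empty]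
  refine ⟨fun m _ => m, fun f1 => ?_⟩
  have hRset : {ω | (fun (m : Bool) (_ : Bool) => m) (M ω) (X2 ω) = Y ω} = {ω | ε2 ω = false} := by
    ext ω
    simp only [Set.mem_setOf_eq]
    rw [hM ω]
    cases Y ω <;> cases ε2 ω <;> simp
  rw [hRset]
  refine lt_of_le_of_lt ?_ hj1j2
  have hLset : {ω | f1 (X1 ω) (X2 ω) = Y ω} =
      {ω | (f1 (X1 ω) (X2 ω) == xor (X1 ω && X2 ω) (ε1 ω)) = true} := by
    ext ω
    simp only [Set.mem_setOf_eq, hY ω, beq_iff_eq]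
  rw [hLset]
  refine le_trans (le_of_eq (part (fun a b c => f1 a b == xor (a && b) c))) ?_
  have hinner : ∀ a b : Bool,
      (∑ c : Bool, if (f1 a b == xor (a && b) c) = true
        then μ {ω | X1 ω = a ∧ X2 ω = b ∧ ε1 ω = c} else 0)
        ≤ 1/2 * (1/2) * μ {ω | ε1 ω = false} := by
    intro a b
    rw [Fintype.sum_bool]
    cases hv : f1 a b <;> cases hw : a && b <;>
      (simp [hv, hw, atom3, hε1]; try gcongr <;> exact hk1le) <;>
      try exact hk1le
  refine le_trans (Finset.sum_le_sum fun a _ => Finset.sum_le_sum fun b _ => hinner a b) ?_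
  simp only [Finset.sum_const, Finset.card_univ, Fintype.card_bool, nsmul_eq_mul,
    Nat.cast_ofNat]
  have h21 : (2 : ENNReal) * (1/2) = 1 := by
    rw [mul_one_div]
    exact ENNReal.div_self (by norm_num) (by norm_num)
  have heq : (2 : ENNReal) * (2 * (1/2 * (1/2) * μ {ω | ε1 ω = false}))
      = μ {ω | ε1 ω = false} := by
    rw [show (2 : ENNReal) * (2 * (1/2 * (1/2) * μ {ω | ε1 ω = false}))
        = (2 * (1/2)) * ((2 * (1/2)) * μ {ω | ε1 ω = false}) by ring]
    rw [h21, one_mul, one_mul]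
  exact le_of_eq heq
end

section
/- Let Z ~ Bernoulli(1/2), ε1 ~ Bernoulli(1/12), ε3 ~ Bernoulli(1/11) mutually independent, Y = |Z − ε1|, X3 = |Y − ε3|. Then P(Y=1 | Z=1, X3=0) = 11/21 and P(Y=0 | Z=0, X3=1) = 11/21; in particular both exceed 1/2. -/
/-!
Given `Z = a`, the event `X3 = !a` happens either through `ε1 = 0, ε3 = 1` (and then `Y = a`)
or through `ε1 = 1, ε3 = 0` (and then `Y = !a`). By independence both atoms carry the factor
`P(Z = a)`, which cancels, so the posterior of `Y = a` is
`(1 - q) r / ((1 - q) r + q (1 - r))` for `q = P(ε1 = 1)`, `r = P(ε3 = 1)`; with `q = 1/12`,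
`r = 1/11` this is `(11/132) / (21/132) = 11/21`.
-/

open MeasureTheory

section BoolNoise

variable {Ω : Type*} (Z ε1 ε3 : Ω → Bool)

theorem setOf_xor_eq_and_eq_and_xor_xor_eq_not (a : Bool) :
    {ω | xor (Z ω) (ε1 ω) = a ∧ Z ω = a ∧ xor (xor (Z ω) (ε1 ω)) (ε3 ω) = !a} =
      {ω | Z ω = a ∧ ε1 ω = false ∧ ε3 ω = true} := by
  ext ω
  simp only [Set.mem_ofPred_eq]
  cases a <;> cases Z ω <;> cases ε1 ω <;> cases ε3 ω <;> simp

theorem setOf_eq_and_xor_xor_eq_not (a : Bool) :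
    {ω | Z ω = a ∧ xor (xor (Z ω) (ε1 ω)) (ε3 ω) = !a} =
      {ω | Z ω = a ∧ ε1 ω = false ∧ ε3 ω = true} ∪
        {ω | Z ω = a ∧ ε1 ω = true ∧ ε3 ω = false} := by
  ext ω
  simp only [Set.mem_ofPred_eq, Set.mem_union]
  cases a <;> cases Z ω <;> cases ε1 ω <;> cases ε3 ω <;> simp

variable [MeasurableSpace Ω] {μ : Measure Ω} {Z ε1 ε3}

theorem measure_eq_false_eq_one_sub [IsProbabilityMeasure μ] (hZ : Measurable Z) :
    μ {ω | Z ω = false} = 1 - μ {ω | Z ω = true} := by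
  have hcompl : {ω | Z ω = false} = {ω | Z ω = true}ᶜ := by ext ω; simp
  exact hcompl ▸ prob_compl_eq_one_sub (hZ (measurableSet_singleton true))

theorem measure_xor_eq_and_eq_and_xor_xor_eq_not_div [IsFiniteMeasure μ]
    (hmZ : Measurable Z) (hmε1 : Measurable ε1) (hmε3 : Measurable ε3)
    (hindep : ∀ a b c : Bool,
      μ {ω | Z ω = a ∧ ε1 ω = b ∧ ε3 ω = c} =
        μ {ω | Z ω = a} * μ {ω | ε1 ω = b} * μ {ω | ε3 ω = c})
    (a : Bool) (hZa : μ {ω | Z ω = a} ≠ 0) :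
    μ {ω | xor (Z ω) (ε1 ω) = a ∧ Z ω = a ∧ xor (xor (Z ω) (ε1 ω)) (ε3 ω) = !a} /
        μ {ω | Z ω = a ∧ xor (xor (Z ω) (ε1 ω)) (ε3 ω) = !a} =
      μ {ω | ε1 ω = false} * μ {ω | ε3 ω = true} /
        (μ {ω | ε1 ω = false} * μ {ω | ε3 ω = true} +
          μ {ω | ε1 ω = true} * μ {ω | ε3 ω = false}) := by
  have hdisj : Disjoint {ω | Z ω = a ∧ ε1 ω = false ∧ ε3 ω = true}
      {ω | Z ω = a ∧ ε1 ω = true ∧ ε3 ω = false} :=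
    Set.disjoint_left.2 fun ω ⟨_, h1, _⟩ ⟨_, h2, _⟩ => by simp [h1] at h2
  have hmeas : MeasurableSet {ω | Z ω = a ∧ ε1 ω = true ∧ ε3 ω = false} :=
    (hmZ (measurableSet_singleton a)).inter
      ((hmε1 (measurableSet_singleton true)).inter (hmε3 (measurableSet_singleton false)))
  rw [setOf_xor_eq_and_eq_and_xor_xor_eq_not, setOf_eq_and_xor_xor_eq_not,
    measure_union hdisj hmeas, hindep, hindep, mul_assoc, mul_assoc, ← mul_add,
    ENNReal.mul_div_mul_left _ _ hZa (measure_ne_top μ _)]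

end BoolNoise

theorem posterior_value :
    ((1 - 1 / 12) * (1 / 11) / ((1 - 1 / 12) * (1 / 11) + 1 / 12 * (1 - 1 / 11)) : ENNReal) =
      11 / 21 := by
  rw [eq_comm, ENNReal.eq_div_iff (by simp [tsub_eq_zero_iff_le]) (by finiteness),
    ← ENNReal.toReal_eq_toReal_iff' (by finiteness) (by finiteness), ENNReal.toReal_mul,
    ENNReal.toReal_add (by finiteness) (by finiteness)]
  simp [ENNReal.toReal_sub_of_le]
  norm_num

/-- With `Z ~ Bernoulli(1/2)`, `ε1 ~ Bernoulli(1/12)`, `ε3 ~ Bernoulli(1/11)` mutually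
independent, `Y = Z XOR ε1`, `X3 = Y XOR ε3`:
`P(Y=1 | Z=1, X3=0) = 11/21` and `P(Y=0 | Z=0, X3=1) = 11/21`, both exceeding `1/2`. -/
theorem stmt8 {Ω : Type*} [MeasurableSpace Ω] (μ : Measure Ω) [IsProbabilityMeasure μ]
    (Z ε1 ε3 Y X3 : Ω → Bool)
    (hmZ : Measurable Z) (hmε1 : Measurable ε1) (hmε3 : Measurable ε3)
    (hZ : μ {ω | Z ω = true} = 1 / 2)
    (hε1 : μ {ω | ε1 ω = true} = 1 / 12)
    (hε3 : μ {ω | ε3 ω = true} = 1 / 11)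
    (hindep : ∀ a b c : Bool,
      μ {ω | Z ω = a ∧ ε1 ω = b ∧ ε3 ω = c} =
        μ {ω | Z ω = a} * μ {ω | ε1 ω = b} * μ {ω | ε3 ω = c})
    (hY : ∀ ω, Y ω = xor (Z ω) (ε1 ω))
    (hX3 : ∀ ω, X3 ω = xor (Y ω) (ε3 ω)) :
    μ {ω | Y ω = true ∧ Z ω = true ∧ X3 ω = false} /
        μ {ω | Z ω = true ∧ X3 ω = false} = 11 / 21 ∧
      μ {ω | Y ω = false ∧ Z ω = false ∧ X3 ω = true} /
        μ {ω | Z ω = false ∧ X3 ω = true} = 11 / 21 ∧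
      (1 / 2 : ENNReal) < 11 / 21 := by
  obtain rfl : Y = fun ω => xor (Z ω) (ε1 ω) := funext hY
  obtain rfl : X3 = fun ω => xor (xor (Z ω) (ε1 ω)) (ε3 ω) := funext hX3
  have hposterior (a : Bool) (hZa : μ {ω | Z ω = a} ≠ 0) :=
    measure_xor_eq_and_eq_and_xor_xor_eq_not_div hmZ hmε1 hmε3 hindep a hZa
  simp only [measure_eq_false_eq_one_sub hmε1, measure_eq_false_eq_one_sub hmε3, hε1, hε3,
    posterior_value] at hposterior
  refine ⟨hposterior true (by simp [hZ]), hposterior false ?_, ?_⟩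
  · simp [measure_eq_false_eq_one_sub hmZ, hZ]
  · rw [← ENNReal.toReal_lt_toReal (by finiteness) (by finiteness)]
    norm_num
end

section
/- Consider a GAM g over boolean threshold features including a sometimes-missing boolean feature b, and an affine imputation model p(x_{−b}) = a·(s(x_{−b}) − s_min)/(s_max − s_min) + d where s is additive in the threshold indicators of the other features. Then for every parameterization β of g there exist M-GAM parameters (β̄, β̄^miss, ᾱ) — consisting of the original coefficients, a missingness-indicator coefficient for feature b, and missingness-interaction coefficients between the indicator of b's missingness and threshold indicators of other features — such that for every input x (with b possibly missing), the M-GAM score equals the imputation-averaged score E[g](x) = p(x_{−b})·g(x^{b+}) + (1 − p(x_{−b}))·g(x^{b−}). -/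
/-!
When `b` is missing the imputation-averaged score is `p·g(x^{b+}) + (1 − p)·g(x^{b−})`, and since
`g` is affine in `x_b` this equals `g(x^{b−}) + β_b·p`. The imputation probability `p` is itself an
affine function of the threshold indicators of the other features, so `β_b·p` is matched by a
missingness coefficient `β_b·(dd − a·s_min/Δ)` plus interaction coefficients `β_b·a·C_{j,k}/Δ`,
where `Δ = s_max − s_min`.
-/

open Finset

variable {ι : Type*} [DecidableEq ι]

theorem imputation_average_of_affine {g S : (ι → ℝ) → ℝ} {b : ι} {β0 βb : ℝ}
    (hg : ∀ x, g x = β0 + S x + βb * x b) (hS : ∀ x c, S (Function.update x b c) = S x)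
    (y : ι → ℝ) (q : ℝ) :
    q * g (Function.update y b 1) + (1 - q) * g (Function.update y b 0) = β0 + S y + βb * q := by
  simp only [hg, hS, Function.update_self]
  ring

variable [Fintype ι] {κ : ι → Type*} [∀ j, Fintype (κ j)]

noncomputable def thresholdScore (b : ι) (t : (j : ι) → κ j → ℝ) (w : (j : ι) → κ j → ℝ)
    (x : ι → ℝ) : ℝ :=
  ∑ j ∈ univ.erase b, ∑ k, w j k * if x j ≤ t j k then 1 else 0

theorem thresholdScore_update_self (b : ι) (t w : (j : ι) → κ j → ℝ) (x : ι → ℝ) (c : ℝ) :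
    thresholdScore b t w (Function.update x b c) = thresholdScore b t w x :=
  sum_congr rfl fun _ hj => by rw [Function.update_of_ne (ne_of_mem_erase hj)]

theorem thresholdScore_const_mul (b : ι) (t w : (j : ι) → κ j → ℝ) (c : ℝ) (x : ι → ℝ) :
    thresholdScore b t (fun j k => c * w j k) x = c * thresholdScore b t w x := by
  simp only [thresholdScore, mul_sum, mul_assoc]

theorem stmt13_general (d : ℕ) (b : Fin d) (len : Fin d → ℕ)
    (t : (j : Fin d) → Fin (len j) → ℝ)
    (β0 βb : ℝ) (β : (j : Fin d) → Fin (len j) → ℝ)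
    (g : (Fin d → ℝ) → ℝ)
    (hg : ∀ x : Fin d → ℝ, g x =
      β0 + (∑ j ∈ Finset.univ.erase b, ∑ k, β j k * (if x j ≤ t j k then (1 : ℝ) else 0))
        + βb * x b)
    (C : (j : Fin d) → Fin (len j) → ℝ)
    (s : (Fin d → ℝ) → ℝ)
    (hs : ∀ x : Fin d → ℝ, s x =
      ∑ j ∈ Finset.univ.erase b, ∑ k, C j k * (if x j ≤ t j k then (1 : ℝ) else 0))
    (a dd smin smax : ℝ)
    (p : (Fin d → ℝ) → ℝ)
    (hp : ∀ x, p x = a * (s x - smin) / (smax - smin) + dd) :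
    ∃ (βmiss : ℝ) (α : (j : Fin d) → Fin (len j) → ℝ),
      ∀ x : Fin d → Option ℝ, (∀ j : Fin d, j ≠ b → (x j).isSome) →
        (β0
          + (∑ j ∈ Finset.univ.erase b, ∑ k, β j k *
              (if (x j).getD 0 ≤ t j k then (1 : ℝ) else 0))
          + βb * (x b).getD 0
          + βmiss * (if x b = none then (1 : ℝ) else 0)
          + ∑ j ∈ Finset.univ.erase b, ∑ k, α j k * (if x b = none then (1 : ℝ) else 0) *
              (if (x j).getD 0 ≤ t j k then (1 : ℝ) else 0)) =
        if x b = none then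
          p (fun j => (x j).getD 0) * g (Function.update (fun j => (x j).getD 0) b 1)
            + (1 - p (fun j => (x j).getD 0)) * g (Function.update (fun j => (x j).getD 0) b 0)
        else g (fun j => (x j).getD 0) := by
  refine ⟨βb * (dd - a * smin / (smax - smin)), fun j k => βb * a / (smax - smin) * C j k,
    fun x _ => ?_⟩
  have hg' : ∀ z, g z = β0 + thresholdScore b t β z + βb * z b := hg
  have hs' : ∀ z, s z = thresholdScore b t C z := hs
  set y : Fin d → ℝ := fun j => (x j).getD 0
  by_cases hb : x b = none
  · simp only [hb, if_true, mul_one, Option.getD_none, mul_zero, add_zero]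
    change β0 + thresholdScore b t β y + _
      + thresholdScore b t (fun j k => βb * a / (smax - smin) * C j k) y = _
    rw [thresholdScore_const_mul,
      imputation_average_of_affine hg' (thresholdScore_update_self b t β), hp, hs']
    ring
  · simp only [hb, if_false, mul_zero, zero_mul, sum_const_zero, add_zero]
    exact (hg y).symm

/-- Theorem 3.3 of the M-GAM paper: for a GAM `g` over threshold features with a sometimes-missing
boolean feature `b`, and an affine-in-additive-score imputation probability `p`, there exist
M-GAM parameters (a missingness-indicator coefficient `βmiss` for `b` and missingness-interaction
coefficients `α` between `b`'s missingness and threshold indicators of the other features) such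
that on every input (with `b` possibly missing, encoded as `none`), the M-GAM score equals the
imputation-averaged score `p·g(x^{b+}) + (1−p)·g(x^{b−})` (which is `g(x)` when `b` is
observed). By convention, a threshold indicator of a missing value evaluates to `0`. -/
theorem stmt13 (d : ℕ) (b : Fin d) (len : Fin d → ℕ)
    (t : (j : Fin d) → Fin (len j) → ℝ)
    (β0 βb : ℝ) (β : (j : Fin d) → Fin (len j) → ℝ)
    (g : (Fin d → ℝ) → ℝ)
    (hg : ∀ x : Fin d → ℝ, g x =
      β0 + (∑ j ∈ Finset.univ.erase b, ∑ k, β j k * (if x j ≤ t j k then (1 : ℝ) else 0))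
        + βb * x b)
    (C : (j : Fin d) → Fin (len j) → ℝ)
    (s : (Fin d → ℝ) → ℝ)
    (hs : ∀ x : Fin d → ℝ, s x =
      ∑ j ∈ Finset.univ.erase b, ∑ k, C j k * (if x j ≤ t j k then (1 : ℝ) else 0))
    (a dd smin smax : ℝ) (hminmax : smin < smax)
    (p : (Fin d → ℝ) → ℝ)
    (hp : ∀ x, p x = a * (s x - smin) / (smax - smin) + dd) :
    ∃ (βmiss : ℝ) (α : (j : Fin d) → Fin (len j) → ℝ),
      ∀ x : Fin d → Option ℝ, (∀ j : Fin d, j ≠ b → (x j).isSome) →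
        (β0
          + (∑ j ∈ Finset.univ.erase b, ∑ k, β j k *
              (if (x j).getD 0 ≤ t j k then (1 : ℝ) else 0))
          + βb * (x b).getD 0
          + βmiss * (if x b = none then (1 : ℝ) else 0)
          + ∑ j ∈ Finset.univ.erase b, ∑ k, α j k * (if x b = none then (1 : ℝ) else 0) *
              (if (x j).getD 0 ≤ t j k then (1 : ℝ) else 0)) =
        if x b = none then
          p (fun j => (x j).getD 0) * g (Function.update (fun j => (x j).getD 0) b 1)
            + (1 - p (fun j => (x j).getD 0)) * g (Function.update (fun j => (x j).getD 0) b 0)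
        else g (fun j => (x j).getD 0) :=
  stmt13_general d b len t β0 βb β g hg C s hs a dd smin smax p hp
end
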